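/- Let n ≥ k ≥ 4 be integers, let G be a graph on n vertices and let u be a vertex of G of degree d_u. Set c_u = k·d_u/n. If c_u ≤ 1 or c_u ≥ 4, then the number of induced k-cycles of G containing u satisfies D_k(G,u) ≤ (128e/81) · (n/k)^{k−1}. -/

import Mathlib

/-- `D_k(G,u)`: the number of vertex subsets `S` of `G` containing `u` such that the induced
subgraph `G[S]` is isomorphic to the `k`-cycle `C_k`. -/
noncomputable def inducedCycleCountAt {V : Type*} [Fintype V] (G : SimpleGraph V) (k : ℕ)
    (u : V) : ℕ :=
  Set.ncard {S : Finset V | u ∈ S ∧ Nonempty (G.induce (S : Set V) ≃g SimpleGraph.cycleGraph k)}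

/-!
Walking around an induced `k`-cycle through `u` in either direction, one leaves `u` towards a
neighbour `w₁`, follows an induced path `w₁, …, w_{k-2}` whose last `k - 3` vertices avoid the
closed neighbourhood of `u`, and returns to `u` from a neighbour `w_{k-1}`; the pair
`(w_{k-1}, [w₁, …, w_{k-2}])` determines the cycle and the direction. Extending an induced path
from its endpoint `x` into a set `A` leaves only `A ∖ N[x]` for the remaining vertices, so by
AM-GM at most `(|A| / t)^t` induced paths start at a given vertex and continue with `t` vertices
of `A`. Hence `2 D_k(G,u) ≤ d² ((n - 1 - d) / (k - 3))^(k-3)` for `d = d_u`.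

The function `d ↦ d² (n - d)^(k-3)` increases up to `2n/(k-1)` and decreases after it, so it is
bounded by its value at `n/k` when `c_u ≤ 1` and by its value at `4n/k` when `c_u ≥ 4`. With
`(1 + x/m)^m ≤ e^x` this gives `D_k(G,u) ≤ C (n/k)^(k-1)` with `C = e²/2` and `C = 8/e`
respectively, both below `128e/81`.
-/

open Finset SimpleGraph
open Fin.NatCast Fin.CommRing

theorem mul_div_pow_le_add_div_pow {a b : ℝ} (ha : 0 ≤ a) (hb : 0 ≤ b) (t : ℕ) :
    a * (b / t) ^ t ≤ ((a + b) / (t + 1)) ^ (t + 1) := by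
  rcases t.eq_zero_or_pos with rfl | ht
  · simpa using hb
  rcases hb.eq_or_lt with rfl | hb
  · rw [zero_div, zero_pow ht.ne', mul_zero]
    positivity
  set c := b / t
  set s := (a + b) / (t + 1)
  have hc : 0 < c := by positivity
  have hbern : a / c ≤ (s / c) ^ (t + 1) := by
    have hsc : (t + 1) * s = t * c + a := by simp only [s, c]; field_simp; ring
    have hlin : 1 + ((t + 1 : ℕ) : ℝ) * (s / c - 1) = a / c := by
      push_cast
      field_simp
      linarith
    have h := one_add_mul_le_pow (a := s / c - 1)
      (by linarith [div_nonneg (by positivity : 0 ≤ s) hc.le]) (t + 1)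
    rwa [add_sub_cancel, hlin] at h
  calc a * c ^ t = a / c * c ^ (t + 1) := by field_simp; ring
    _ ≤ (s / c) ^ (t + 1) * c ^ (t + 1) := by gcongr
    _ = s ^ (t + 1) := by rw [div_pow, div_mul_cancel₀ _ (by positivity)]

section InducedPaths

variable {V : Type*} [DecidableEq V] (G : SimpleGraph V) [DecidableRel G.Adj]

/-- The lists `[x, v₁, …, v_t]` that form an induced path of `G` with `v₁, …, v_t ∈ A`. -/
def inducedPathsFrom : ℕ → V → Finset V → Finset (List V)
  | 0, x, _ => {[x]}
  | t + 1, x, A => {y ∈ A | G.Adj x y}.biUnion fun y =>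
      (inducedPathsFrom t y ({z ∈ A | ¬ G.Adj x z}.erase x)).image (x :: ·)

theorem card_inducedPathsFrom_le (t : ℕ) (x : V) (A : Finset V) :
    (#(inducedPathsFrom G t x A) : ℝ) ≤ (#A / t) ^ t := by
  induction t generalizing x A with
  | zero => simp [inducedPathsFrom]
  | succ t ih =>
    set N := {y ∈ A | G.Adj x y}
    set A' := {z ∈ A | ¬ G.Adj x z}.erase x
    have hA' : #A' + #N ≤ #A := by
      have h₁ : #N + #{z ∈ A | ¬ G.Adj x z} = #A := card_filter_add_card_filter_not _
      have h₂ : #A' ≤ #{z ∈ A | ¬ G.Adj x z} := card_erase_le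
      omega
    have hA'R : (#A' : ℝ) ≤ #A - #N := by
      rw [le_sub_iff_add_le]; exact_mod_cast hA'
    calc (#(inducedPathsFrom G (t + 1) x A) : ℝ)
        ≤ ∑ y ∈ N, (#(inducedPathsFrom G t y A') : ℝ) := by
          exact_mod_cast card_biUnion_le.trans (sum_le_sum fun _ _ => card_image_le)
      _ ≤ ∑ y ∈ N, (((#A : ℝ) - #N) / t) ^ t :=
          sum_le_sum fun y _ => (ih y A').trans (by gcongr)
      _ = #N * (((#A : ℝ) - #N) / t) ^ t := by rw [sum_const, nsmul_eq_mul]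
      _ ≤ ((#N + ((#A : ℝ) - #N)) / (t + 1)) ^ (t + 1) :=
          mul_div_pow_le_add_div_pow (by positivity)
            (by linarith [Nat.cast_nonneg (α := ℝ) #A']) t
      _ = (#A / ↑(t + 1)) ^ (t + 1) := by push_cast; ring_nf

theorem map_range_mem_inducedPathsFrom {t : ℕ} {f : ℕ → V} {A : Finset V}
    (hadj : ∀ i < t, G.Adj (f i) (f (i + 1)))
    (hfar : ∀ i j, i + 2 ≤ j → j ≤ t → ¬ G.Adj (f i) (f j) ∧ f i ≠ f j)
    (hA : ∀ i, 1 ≤ i → i ≤ t → f i ∈ A) :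
    (List.range (t + 1)).map f ∈ inducedPathsFrom G t (f 0) A := by
  induction t generalizing f A with
  | zero => simp [inducedPathsFrom]
  | succ t ih =>
    rw [List.range_succ_eq_map, List.map_cons, List.map_map, inducedPathsFrom, mem_biUnion]
    refine ⟨f 1, mem_filter.2 ⟨hA 1 le_rfl (by omega), hadj 0 (by omega)⟩,
      mem_image.2 ⟨_, ih (f := f ∘ Nat.succ) ?_ ?_ ?_, rfl⟩⟩
    · exact fun i hi => hadj (i + 1) (by omega)
    · exact fun i j hij hj => hfar (i + 1) (j + 1) (by omega) (by omega)
    · intro i hi1 hit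
      have h0 := hfar 0 (i + 1) (by omega) (by omega)
      exact mem_erase.2 ⟨h0.2.symm, mem_filter.2 ⟨hA (i + 1) (by omega) (by omega), h0.1⟩⟩

end InducedPaths

theorem intCast_units_mul_self {R : Type*} [Ring R] (e : ℤˣ) :
    ((e : ℤ) : R) * (e : ℤ) = 1 := by
  rw [← Int.cast_mul, ← Units.val_mul, Int.units_mul_self, Units.val_one, Int.cast_one]

section CycleWalk

variable {k : ℕ} [NeZero k]

theorem cycleGraph_adj_add_mul_iff (r : Fin k) (e : ℤˣ) (a b : Fin k) :
    (cycleGraph k).Adj (r + (e : ℤ) * a) (r + (e : ℤ) * b) ↔ (cycleGraph k).Adj a b := by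
  rcases Int.units_eq_one_or e with rfl | rfl
  · simp only [Units.val_one, Int.cast_one, one_mul, cycleGraph_adj', add_sub_add_left_eq_sub]
  · simp only [cycleGraph_adj', Units.val_neg, Units.val_one, Int.cast_neg, Int.cast_one]
    rw [or_comm]
    ring_nf

theorem cycleGraph_adj_natCast_iff (hk : 2 ≤ k) {a b : ℕ} (ha : a < k) (hb : b < k) :
    (cycleGraph k).Adj (a : Fin k) (b : Fin k) ↔ (a + 1) % k = b ∨ (b + 1) % k = a := by
  have hsub (x y : ℕ) (hx : x < k) : ((x : Fin k) - y).val = 1 ↔ (y + 1) % k = x := by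
    have hone (z : Fin k) : z.val = 1 ↔ z = 1 := by
      rw [Fin.ext_iff, Fin.val_one', Nat.mod_eq_of_lt (by omega)]
    rw [hone, sub_eq_iff_eq_add, show (1 : Fin k) + y = ((y + 1 : ℕ) : Fin k) by push_cast; ring,
      Fin.ext_iff, Fin.val_natCast, Fin.val_natCast, Nat.mod_eq_of_lt hx, eq_comm]
  rw [cycleGraph_adj', hsub a b ha, hsub b a hb, or_comm]

variable {V : Type*} {G : SimpleGraph V} {S : Set V}

def cycleWalk (φ : G.induce S ≃g cycleGraph k) (x : S) (e : ℤˣ) (j : ℕ) : V :=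
  φ.symm (φ x + (e : ℤ) * j)

variable (φ : G.induce S ≃g cycleGraph k) (x : S) (e : ℤˣ)

theorem cycleWalk_zero : cycleWalk φ x e 0 = x := by
  simp [cycleWalk]

theorem cycleWalk_mem (j : ℕ) : cycleWalk φ x e j ∈ S :=
  Subtype.coe_prop _

theorem cycleWalk_adj_iff (hk : 2 ≤ k) {a b : ℕ} (ha : a < k) (hb : b < k) :
    G.Adj (cycleWalk φ x e a) (cycleWalk φ x e b) ↔ (a + 1) % k = b ∨ (b + 1) % k = a := by
  change (G.induce S).Adj _ _ ↔ _
  rw [φ.symm.map_adj_iff, cycleGraph_adj_add_mul_iff, cycleGraph_adj_natCast_iff hk ha hb]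

theorem cycleWalk_inj {a b : ℕ} (ha : a < k) (hb : b < k) :
    cycleWalk φ x e a = cycleWalk φ x e b ↔ a = b := by
  rw [cycleWalk, cycleWalk, Subtype.val_inj, φ.symm.apply_eq_iff_eq, add_right_inj,
    (IsUnit.of_mul_eq_one _ (intCast_units_mul_self e)).mul_right_inj, Fin.ext_iff,
    Fin.val_natCast, Fin.val_natCast, Nat.mod_eq_of_lt ha, Nat.mod_eq_of_lt hb]

theorem exists_cycleWalk_eq {s : V} (hs : s ∈ S) : ∃ a < k, cycleWalk φ x e a = s := by
  refine ⟨(((e : ℤ) : Fin k) * (φ ⟨s, hs⟩ - φ x)).val, Fin.is_lt _, ?_⟩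
  rw [cycleWalk, Fin.cast_val_eq_self, ← mul_assoc, intCast_units_mul_self, one_mul,
    add_sub_cancel, RelIso.symm_apply_apply]

theorem cycleWalk_one_inj (hk : 3 ≤ k) (e' : ℤˣ) :
    cycleWalk φ x e 1 = cycleWalk φ x e' 1 ↔ e = e' := by
  have hne : (1 : Fin k) ≠ -1 := by
    intro h
    have h2 : ((2 : ℕ) : Fin k) = ((0 : ℕ) : Fin k) := by push_cast; linear_combination h
    rw [Fin.ext_iff, Fin.val_natCast, Fin.val_natCast, Nat.mod_eq_of_lt (by omega),
      Nat.zero_mod] at h2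
    omega
  rw [cycleWalk, cycleWalk, Subtype.val_inj, φ.symm.apply_eq_iff_eq, add_right_inj]
  rcases Int.units_eq_one_or e with rfl | rfl <;> rcases Int.units_eq_one_or e' with rfl | rfl <;>
    simp [hne, hne.symm]

end CycleWalk

def cycleCodes {V : Type*} [Fintype V] [DecidableEq V] (G : SimpleGraph V)
    [DecidableRel G.Adj] (u : V) (m : ℕ) : Finset (V × List V) :=
  G.neighborFinset u ×ˢ (G.neighborFinset u).biUnion fun y =>
    inducedPathsFrom G m y (insert u (G.neighborFinset u))ᶜ

section CycleCode

variable {V : Type*} {G : SimpleGraph V} {S : Finset V} {m : ℕ}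

def cycleCode (φ : G.induce (S : Set V) ≃g cycleGraph (m + 3)) (x : (S : Set V)) (e : ℤˣ) :
    V × List V :=
  (cycleWalk φ x e (m + 2), (List.range (m + 1)).map fun i => cycleWalk φ x e (i + 1))

variable (φ : G.induce (S : Set V) ≃g cycleGraph (m + 3)) (x : (S : Set V)) (e : ℤˣ)

theorem eq_insert_cycleCode [DecidableEq V] :
    S = insert x.1 (insert (cycleCode φ x e).1 (cycleCode φ x e).2.toFinset) := by
  ext s
  simp only [cycleCode, mem_insert, List.mem_toFinset, List.mem_map, List.mem_range]
  constructor
  · intro hs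
    obtain ⟨a, ha, rfl⟩ := exists_cycleWalk_eq φ x e (s := s) hs
    rcases a with _ | i
    · exact Or.inl (cycleWalk_zero φ x e)
    · rcases (by omega : i = m + 1 ∨ i < m + 1) with rfl | hi
      · exact Or.inr (Or.inl rfl)
      · exact Or.inr (Or.inr ⟨i, hi, rfl⟩)
  · rintro (rfl | rfl | ⟨i, -, rfl⟩)
    · exact x.2
    all_goals exact cycleWalk_mem φ x e _

theorem cycleCode_injective : Function.Injective (cycleCode φ x) := by
  intro e e' h
  have h1 := congrArg (fun c => c.2.head?) h
  simp only [cycleCode, List.range_succ_eq_map, List.map_cons, List.head?_cons,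
    Option.some.injEq] at h1
  exact (cycleWalk_one_inj φ x e (by omega) e').1 h1

variable [Fintype V] [DecidableEq V] [DecidableRel G.Adj]

theorem cycleCode_mem_cycleCodes : cycleCode φ x e ∈ cycleCodes G x m := by
  have hadj {a b : ℕ} (ha : a < m + 3) (hb : b < m + 3) :=
    cycleWalk_adj_iff φ x e (by omega) ha hb
  have hinj {a b : ℕ} (ha : a < m + 3) (hb : b < m + 3) := cycleWalk_inj φ x e ha hb
  have hx := cycleWalk_zero φ x e
  set w := cycleWalk φ x e
  rw [cycleCode, cycleCodes, mem_product, mem_biUnion]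
  refine ⟨?_, w 1, ?_, map_range_mem_inducedPathsFrom G (f := fun i => w (i + 1)) ?_ ?_ ?_⟩
  · rw [mem_neighborFinset, ← hx, hadj (by omega) (by omega), Nat.mod_self]
    exact Or.inr rfl
  · rw [mem_neighborFinset, ← hx, hadj (by omega) (by omega), Nat.mod_eq_of_lt (by omega)]
    exact Or.inl rfl
  · intro i hi
    rw [hadj (by omega) (by omega), Nat.mod_eq_of_lt (by omega)]
    exact Or.inl rfl
  · intro i j hij hj
    rw [hadj (by omega) (by omega), ne_eq, hinj (by omega) (by omega), Nat.mod_eq_of_lt (by omega),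
      Nat.mod_eq_of_lt (by omega)]
    omega
  · intro i hi hi'
    rw [mem_compl, mem_insert, mem_neighborFinset, ← hx, hinj (by omega) (by omega),
      hadj (by omega) (by omega), Nat.mod_eq_of_lt (by omega), Nat.mod_eq_of_lt (by omega)]
    omega

end CycleCode

section Counting

variable {V : Type*} [Fintype V] [DecidableEq V] (G : SimpleGraph V) [DecidableRel G.Adj]
  (u : V) (m : ℕ)

theorem two_mul_inducedCycleCountAt_le_card_cycleCodes :
    2 * inducedCycleCountAt G (m + 3) u ≤ #(cycleCodes G u m) := by
  let C : Set (Finset V) :=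
    {S : Finset V | u ∈ S ∧ Nonempty (G.induce (S : Set V) ≃g cycleGraph (m + 3))}
  let f : C × ℤˣ → cycleCodes G u m := fun p =>
    ⟨cycleCode p.1.2.2.some ⟨u, p.1.2.1⟩ p.2,
      cycleCode_mem_cycleCodes (x := ⟨u, p.1.2.1⟩) p.1.2.2.some p.2⟩
  have hf : Function.Injective f := by
    rintro ⟨⟨S, hS⟩, e⟩ ⟨⟨S', hS'⟩, e'⟩ h
    have h' := congrArg Subtype.val h
    obtain rfl : S = S' := calc
      S = _ := eq_insert_cycleCode hS.2.some ⟨u, hS.1⟩ e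
      _ = _ := by simp only [f] at h'; rw [h']
      _ = S' := (eq_insert_cycleCode hS'.2.some ⟨u, hS'.1⟩ e').symm
    obtain rfl := cycleCode_injective _ _ h'
    rfl
  calc 2 * inducedCycleCountAt G (m + 3) u = Nat.card (C × ℤˣ) := by
        rw [Nat.card_prod, Nat.card_coe_set_eq, Nat.card_eq_fintype_card, Fintype.card_units_int,
          mul_comm]
        rfl
    _ ≤ Nat.card (cycleCodes G u m) := Nat.card_le_card_of_injective f hf
    _ = #(cycleCodes G u m) := Nat.card_eq_finsetCard _

theorem card_cycleCodes_le :
    (#(cycleCodes G u m) : ℝ) ≤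
      G.degree u ^ 2 * ((Fintype.card V - 1 - G.degree u) / m) ^ m := by
  have hA : (#(insert u (G.neighborFinset u))ᶜ : ℝ) = Fintype.card V - 1 - G.degree u := by
    have := G.degree_lt_card_verts u
    rw [card_compl, card_insert_of_notMem (G.notMem_neighborFinset_self u),
      card_neighborFinset_eq_degree, Nat.cast_sub (by omega)]
    push_cast
    ring
  rw [cycleCodes, card_product, card_neighborFinset_eq_degree, Nat.cast_mul, sq, mul_assoc]
  gcongr
  calc (#((G.neighborFinset u).biUnion fun y =>
          inducedPathsFrom G m y (insert u (G.neighborFinset u))ᶜ) : ℝ)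
      ≤ ∑ y ∈ G.neighborFinset u,
          (#(inducedPathsFrom G m y (insert u (G.neighborFinset u))ᶜ) : ℝ) := by
        exact_mod_cast card_biUnion_le
    _ ≤ ∑ y ∈ G.neighborFinset u, ((Fintype.card V - 1 - G.degree u) / m : ℝ) ^ m :=
        sum_le_sum fun y _ => hA ▸ card_inducedPathsFrom_le G m y _
    _ = G.degree u * ((Fintype.card V - 1 - G.degree u) / m) ^ m := by
        rw [sum_const, nsmul_eq_mul, card_neighborFinset_eq_degree]

theorem two_mul_inducedCycleCountAt_le :
    2 * (inducedCycleCountAt G (m + 3) u : ℝ) ≤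
      G.degree u ^ 2 * ((Fintype.card V - 1 - G.degree u) / m) ^ m := by
  exact_mod_cast (Nat.cast_le.2 (two_mul_inducedCycleCountAt_le_card_cycleCodes G u m)).trans
    (card_cycleCodes_le G u m)

end Counting

section Calculus

theorem hasDerivAt_sq_mul_sub_pow (N : ℝ) (m : ℕ) (x : ℝ) :
    HasDerivAt (fun y => y ^ 2 * (N - y) ^ m)
      (2 * x * (N - x) ^ m - m * x ^ 2 * (N - x) ^ (m - 1)) x := by
  refine ((hasDerivAt_pow 2 x).fun_mul
    (((hasDerivAt_id' x).const_sub N).fun_pow m)).congr_deriv ?_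
  push_cast
  ring

theorem deriv_sq_mul_sub_pow_succ (N : ℝ) (m : ℕ) (x : ℝ) :
    deriv (fun y => y ^ 2 * (N - y) ^ (m + 1)) x
      = x * (N - x) ^ m * (2 * (N - x) - (m + 1) * x) := by
  rw [(hasDerivAt_sq_mul_sub_pow N (m + 1) x).deriv]
  push_cast
  ring

theorem monotoneOn_sq_mul_sub_pow (N : ℝ) (m : ℕ) :
    MonotoneOn (fun x => x ^ 2 * (N - x) ^ m) (Set.Icc 0 (2 * N / (m + 2))) := by
  refine monotoneOn_of_deriv_nonneg (convex_Icc _ _) (by fun_prop)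
    (fun x _ => (hasDerivAt_sq_mul_sub_pow N m x).differentiableAt.differentiableWithinAt)
    fun x hx => ?_
  rw [interior_Icc, Set.mem_Ioo, lt_div_iff₀ (by positivity)] at hx
  rcases m with _ | m
  · rw [(hasDerivAt_sq_mul_sub_pow N 0 x).deriv]
    simp only [CharP.cast_eq_zero, zero_mul, sub_zero, pow_zero]
    linarith
  · rw [deriv_sq_mul_sub_pow_succ]
    push_cast at hx
    have hNx : 0 < N - x := by nlinarith
    exact mul_nonneg (mul_nonneg hx.1.le (pow_nonneg hNx.le _)) (by nlinarith)

theorem antitoneOn_sq_mul_sub_pow (N : ℝ) (m : ℕ) :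
    AntitoneOn (fun x => x ^ 2 * (N - x) ^ m) (Set.Icc (2 * N / (m + 2)) N) := by
  refine antitoneOn_of_deriv_nonpos (convex_Icc _ _) (by fun_prop)
    (fun x _ => (hasDerivAt_sq_mul_sub_pow N m x).differentiableAt.differentiableWithinAt)
    fun x hx => ?_
  rw [interior_Icc, Set.mem_Ioo, div_lt_iff₀ (by positivity)] at hx
  rcases m with _ | m
  · push_cast at hx
    linarith
  · rw [deriv_sq_mul_sub_pow_succ]
    push_cast at hx
    have hx0 : 0 < x := by nlinarith
    have hNx : 0 < N - x := by linarith
    exact mul_nonpos_of_nonneg_of_nonpos (mul_nonneg hx0.le (pow_nonneg hNx.le _))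
      (by nlinarith)

end Calculus

theorem add_pow_le_exp_mul_pow {m : ℕ} {t : ℝ} (ht : -m ≤ t) :
    (m + t) ^ m ≤ Real.exp t * m ^ m := by
  rcases m.eq_zero_or_pos with rfl | hm
  · simpa using Real.one_le_exp (by simpa using ht)
  have hm' : (0 : ℝ) < m := by exact_mod_cast hm
  calc (m + t) ^ m = (1 - -t / m) ^ m * m ^ m := by rw [← mul_pow]; congr 1; field_simp; ring
    _ ≤ Real.exp (- -t) * m ^ m := by
        gcongr
        exact Real.one_sub_div_pow_le_exp_neg (by linarith)
    _ = Real.exp t * m ^ m := by rw [neg_neg]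

theorem sq_mul_sub_pow_le_of_le_div (m : ℕ) {N d : ℝ} (hd : 0 ≤ d) (hdq : d ≤ N / (m + 3)) :
    d ^ 2 * (N - d) ^ m ≤ Real.exp 2 * m ^ m * (N / (m + 3)) ^ (m + 2) := by
  set q := N / (m + 3)
  have hq : 0 ≤ q := hd.trans hdq
  have hN : N = (m + 3) * q := by simp only [q]; field_simp
  have hq_peak : q ≤ 2 * N / (m + 2) := by rw [hN, le_div_iff₀ (by positivity)]; nlinarith
  calc d ^ 2 * (N - d) ^ m ≤ q ^ 2 * (N - q) ^ m :=
        monotoneOn_sq_mul_sub_pow N m ⟨hd, hdq.trans hq_peak⟩ ⟨hq, hq_peak⟩ hdq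
    _ = (m + 2) ^ m * q ^ (m + 2) := by
        rw [show N - q = (m + 2) * q by rw [hN]; ring, mul_pow]; ring
    _ ≤ Real.exp 2 * m ^ m * q ^ (m + 2) := by
        gcongr
        exact add_pow_le_exp_mul_pow (by linarith [Nat.cast_nonneg (α := ℝ) m])

theorem sq_mul_sub_pow_le_of_div_le (m : ℕ) (hm : 1 ≤ m) {N d : ℝ} (hN : 0 ≤ N)
    (hqd : 4 * N / (m + 3) ≤ d) (hdN : d ≤ N) :
    d ^ 2 * (N - d) ^ m ≤ 16 * Real.exp (-1) * m ^ m * (N / (m + 3)) ^ (m + 2) := by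
  set q := N / (m + 3)
  have hq : 0 ≤ q := by positivity
  have hN : N = (m + 3) * q := by simp only [q]; field_simp
  have hm' : (1 : ℝ) ≤ m := by exact_mod_cast hm
  have h4q : 4 * N / (m + 3) = 4 * q := by ring
  have hpeak_q : 2 * N / (m + 2) ≤ 4 * q := by rw [hN, div_le_iff₀ (by positivity)]; nlinarith
  rw [h4q] at hqd
  calc d ^ 2 * (N - d) ^ m ≤ (4 * q) ^ 2 * (N - 4 * q) ^ m :=
        antitoneOn_sq_mul_sub_pow N m ⟨hpeak_q, hqd.trans hdN⟩ ⟨hpeak_q.trans hqd, hdN⟩ hqd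
    _ = 16 * (m + -1) ^ m * q ^ (m + 2) := by
        rw [show N - 4 * q = (m + -1) * q by rw [hN]; ring, mul_pow _ q m]; ring
    _ ≤ 16 * (Real.exp (-1) * m ^ m) * q ^ (m + 2) := by
        gcongr
        exact add_pow_le_exp_mul_pow (by linarith)
    _ = 16 * Real.exp (-1) * m ^ m * q ^ (m + 2) := by ring

theorem sq_mul_div_pow_le_of_extreme (m : ℕ) (hm : 1 ≤ m) {N d : ℝ} (hd : 0 ≤ d)
    (hdN : d ≤ N) (hext : d ≤ N / (m + 3) ∨ 4 * N / (m + 3) ≤ d) :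
    d ^ 2 * ((N - d) / m) ^ m ≤ 2 * (128 * Real.exp 1 / 81) * (N / (m + 3)) ^ (m + 2) := by
  have he := Real.exp_one_gt_d9
  have he' := Real.exp_one_lt_d9
  have hmm : (0 : ℝ) < m ^ m := pow_pos (by exact_mod_cast hm) m
  have hq : 0 ≤ m ^ m * (N / (m + 3)) ^ (m + 2) :=
    mul_nonneg hmm.le (pow_nonneg (div_nonneg (hd.trans hdN) (by positivity)) _)
  rw [div_pow, ← mul_div_assoc, div_le_iff₀ hmm]
  rcases hext with hlow | hhigh
  · refine (sq_mul_sub_pow_le_of_le_div m hd hlow).trans ?_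
    have : Real.exp 2 ≤ 2 * (128 * Real.exp 1 / 81) := by
      rw [show (2 : ℝ) = 1 + 1 by norm_num, Real.exp_add]
      nlinarith
    linear_combination mul_le_mul_of_nonneg_right this hq
  · refine (sq_mul_sub_pow_le_of_div_le m hm (hd.trans hdN) hhigh hdN).trans ?_
    have : 16 * Real.exp (-1) ≤ 2 * (128 * Real.exp 1 / 81) := by
      rw [Real.exp_neg, ← div_eq_mul_inv, div_le_iff₀ (Real.exp_pos 1)]
      nlinarith
    linear_combination mul_le_mul_of_nonneg_right this hq

theorem cycleCountAt_le_of_degree_extreme_general (n k : ℕ) (hk : 4 ≤ k)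
    (G : SimpleGraph (Fin n)) [DecidableRel G.Adj] (u : Fin n)
    (hc : (k : ℝ) * (G.degree u : ℝ) / (n : ℝ) ≤ 1 ∨
          4 ≤ (k : ℝ) * (G.degree u : ℝ) / (n : ℝ)) :
    (inducedCycleCountAt G k u : ℝ) ≤
      128 * Real.exp 1 / 81 * ((n : ℝ) / (k : ℝ)) ^ (k - 1) := by
  obtain ⟨m, rfl⟩ : ∃ m, k = m + 3 := ⟨k - 3, by omega⟩
  set d := G.degree u
  have hn : (0 : ℝ) < n := by exact_mod_cast u.pos
  have hdn : (d : ℝ) + 1 ≤ n := by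
    exact_mod_cast (G.degree_lt_card_verts u).trans_eq (Fintype.card_fin n)
  have hext : (d : ℝ) ≤ n / (m + 3) ∨ 4 * (n : ℝ) / (m + 3) ≤ d := by
    push_cast at hc
    rw [div_le_one hn, le_div_iff₀ hn] at hc
    rw [le_div_iff₀ (by positivity), div_le_iff₀ (by positivity)]
    exact hc.imp (fun h => by linarith) (fun h => by linarith)
  have hcount := two_mul_inducedCycleCountAt_le G u m
  have hbound := sq_mul_div_pow_le_of_extreme m (by omega) (Nat.cast_nonneg d) (by linarith) hext
  rw [Fintype.card_fin] at hcount
  push_cast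
  calc (inducedCycleCountAt G (m + 3) u : ℝ) ≤ d ^ 2 * ((n - 1 - d) / m) ^ m / 2 := by linarith
    _ ≤ d ^ 2 * ((n - d) / m) ^ m / 2 := by
        have : (0 : ℝ) ≤ (n - 1 - d) / m := div_nonneg (by linarith) m.cast_nonneg
        gcongr
        linarith
    _ ≤ 128 * Real.exp 1 / 81 * (n / (m + 3)) ^ (m + 2) := by linarith

/-- For `n ≥ k ≥ 4`, a graph `G` on `n` vertices and a vertex `u` with normalised degree
`c_u = k·d_u/n`, if `c_u ≤ 1` or `c_u ≥ 4` then `D_k(G,u) ≤ (128e/81)·(n/k)^(k-1)`. -/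
theorem cycleCountAt_le_of_degree_extreme (n k : ℕ) (hk : 4 ≤ k) (hkn : k ≤ n)
    (G : SimpleGraph (Fin n)) [DecidableRel G.Adj] (u : Fin n)
    (hc : (k : ℝ) * (G.degree u : ℝ) / (n : ℝ) ≤ 1 ∨
          4 ≤ (k : ℝ) * (G.degree u : ℝ) / (n : ℝ)) :
    (inducedCycleCountAt G k u : ℝ) ≤
      128 * Real.exp 1 / 81 * ((n : ℝ) / (k : ℝ)) ^ (k - 1) :=
  cycleCountAt_le_of_degree_extreme_general n k hk G u hc
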